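/- With the setup of the QUBO Q = αH_A + βH_B + γH_O for the maximum common induced subgraph problem (α, β > γ > 0), if (x, p, s) minimizes Q, then Q(x, p, s) = -γ·|A_x| where A_x = {u ∈ V_1 : ∃i, x_{u,i} = 1}, and |A_x| equals the maximum size of a set A ⊆ V_1 such that G_1[A] is isomorphic to G_2[B] for some B ⊆ V_2. -/
import Mathlib


open Finset

/-- Real value of a binary (Boolean) variable. -/
def bval (v : Bool) : ℝ := if v then 1 else 0

variable {V₁ V₂ : Type*}

/-- `H_O = -Σ_{u∈V₁} p_u`. -/
def HO [Fintype V₁] (p : V₁ → Bool) : ℝ := -∑ u : V₁, bval (p u)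

/-- `H_A = Σ_{u∈V₁}(p_u - Σ_{i∈V₂} x_{u,i})² + Σ_{i∈V₂}(s_i - Σ_{u∈V₁} x_{u,i})²`. -/
def HA [Fintype V₁] [Fintype V₂] (x : V₁ → V₂ → Bool) (p : V₁ → Bool) (s : V₂ → Bool) : ℝ :=
    ∑ u : V₁, (bval (p u) - ∑ i : V₂, bval (x u i)) ^ 2 +
      ∑ i : V₂, (bval (s i) - ∑ u : V₁, bval (x u i)) ^ 2

/-- `H_B`, written as a sum over ordered pairs with a factor `1/2` to account
for the unordered pairs `{u,v} ∈ E₁`, `{i,j} ∉ E₂` (with `i ≠ j`) and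
`{u,v} ∉ E₁` (with `u ≠ v`), `{i,j} ∈ E₂`. -/
noncomputable def HB [Fintype V₁] [Fintype V₂] (G₁ : SimpleGraph V₁) (G₂ : SimpleGraph V₂)
    [DecidableEq V₁] [DecidableEq V₂] [DecidableRel G₁.Adj] [DecidableRel G₂.Adj]
    (x : V₁ → V₂ → Bool) : ℝ :=
    (1 / 2) * ∑ u : V₁, ∑ v : V₁, ∑ i : V₂, ∑ j : V₂,
      (((if G₁.Adj u v ∧ i ≠ j ∧ ¬ G₂.Adj i j then 1 else 0) : ℝ) +
        ((if u ≠ v ∧ ¬ G₁.Adj u v ∧ G₂.Adj i j then 1 else 0) : ℝ)) *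
        bval (x u i) * bval (x v j)

/-- The QUBO for the maximum common induced subgraph problem. -/
noncomputable def QMCIS [Fintype V₁] [Fintype V₂] (G₁ : SimpleGraph V₁) (G₂ : SimpleGraph V₂)
    [DecidableEq V₁] [DecidableEq V₂] [DecidableRel G₁.Adj] [DecidableRel G₂.Adj]
    (α β γ : ℝ) (x : V₁ → V₂ → Bool) (p : V₁ → Bool) (s : V₂ → Bool) : ℝ :=
    α * HA x p s + β * HB G₁ G₂ x + γ * HO p

namespace MCISaux
set_option linter.unusedSectionVars false
open Finset

lemma bval_eq (v : Bool) : bval v = if v = true then 1 else 0 := by cases v <;> simp [bval]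
lemma bval_nonneg (v : Bool) : 0 ≤ bval v := by cases v <;> simp [bval]
@[simp] lemma bval_true : bval true = 1 := rfl
@[simp] lemma bval_false : bval false = 0 := rfl

lemma bval_le {a b : Bool} (h : a = true → b = true) : bval a ≤ bval b := by
  cases a
  · cases b <;> simp [bval]
  · simp [h rfl]

lemma sum_bval {ι : Type*} [Fintype ι] (f : ι → Bool) :
    ∑ i, bval (f i) = ((univ.filter fun i => f i = true).card : ℝ) := by
  simp [bval_eq, Finset.sum_boole]

variable [Fintype V₁] [Fintype V₂] [DecidableEq V₁] [DecidableEq V₂]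

def rowc (x : V₁ → V₂ → Bool) (u : V₁) : ℕ := (univ.filter fun i => x u i = true).card
def colc (x : V₁ → V₂ → Bool) (i : V₂) : ℕ := (univ.filter fun u => x u i = true).card

lemma rowc_pos {x : V₁ → V₂ → Bool} {u : V₁} {i : V₂} (h : x u i = true) : 1 ≤ rowc x u :=
  Finset.card_pos.2 ⟨i, by simp [h]⟩

lemma colc_pos {x : V₁ → V₂ → Bool} {u : V₁} {i : V₂} (h : x u i = true) : 1 ≤ colc x i :=
  Finset.card_pos.2 ⟨u, by simp [h]⟩

lemma HA_eq (x : V₁ → V₂ → Bool) (p : V₁ → Bool) (s : V₂ → Bool) :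
    HA x p s = ∑ u, (bval (p u) - (rowc x u : ℝ)) ^ 2 + ∑ i, (bval (s i) - (colc x i : ℝ)) ^ 2 := by
  simp [HA, sum_bval, rowc, colc]

lemma HO_eq (p : V₁ → Bool) : HO p = -((univ.filter fun u => p u = true).card : ℝ) := by
  simp [HO, sum_bval]

variable (G₁ : SimpleGraph V₁) (G₂ : SimpleGraph V₂) [DecidableRel G₁.Adj] [DecidableRel G₂.Adj]

def W (u v : V₁) (i j : V₂) : ℝ :=
  (if G₁.Adj u v ∧ i ≠ j ∧ ¬ G₂.Adj i j then 1 else 0) +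
    (if u ≠ v ∧ ¬ G₁.Adj u v ∧ G₂.Adj i j then 1 else 0)

lemma W_nonneg (u v : V₁) (i j : V₂) : 0 ≤ W G₁ G₂ u v i j := by
  unfold W; positivity

lemma W_symm (u v : V₁) (i j : V₂) : W G₁ G₂ u v i j = W G₁ G₂ v u j i := by
  unfold W
  congr 1
  · exact if_congr ⟨fun ⟨h1, h2, h3⟩ => ⟨h1.symm, h2.symm, fun h => h3 h.symm⟩,
      fun ⟨h1, h2, h3⟩ => ⟨h1.symm, h2.symm, fun h => h3 h.symm⟩⟩ rfl rfl
  · exact if_congr ⟨fun ⟨h1, h2, h3⟩ => ⟨h1.symm, fun h => h2 h.symm, h3.symm⟩,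
      fun ⟨h1, h2, h3⟩ => ⟨h1.symm, fun h => h2 h.symm, h3.symm⟩⟩ rfl rfl

lemma W_diag (u : V₁) (i j : V₂) : W G₁ G₂ u u i j = 0 := by
  simp [W]

lemma one_le_W {u v : V₁} {i j : V₂}
    (h : (G₁.Adj u v ∧ i ≠ j ∧ ¬ G₂.Adj i j) ∨ (u ≠ v ∧ ¬ G₁.Adj u v ∧ G₂.Adj i j)) :
    1 ≤ W G₁ G₂ u v i j := by
  rcases h with h | h
  · have : ¬(u ≠ v ∧ ¬ G₁.Adj u v ∧ G₂.Adj i j) := fun h' => h'.2.1 h.1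
    simp [W, h, this]
  · have : ¬(G₁.Adj u v ∧ i ≠ j ∧ ¬ G₂.Adj i j) := fun h' => h.2.1 h'.1
    simp [W, h, this]

lemma HB_eq_sum (x : V₁ → V₂ → Bool) :
    HB G₁ G₂ x = (1 / 2) * ∑ t : (V₁ × V₁) × V₂ × V₂,
      W G₁ G₂ t.1.1 t.1.2 t.2.1 t.2.2 * bval (x t.1.1 t.2.1) * bval (x t.1.2 t.2.2) := by
  rw [HB]
  simp [Fintype.sum_prod_type, W]

lemma HB_nonneg (x : V₁ → V₂ → Bool) : 0 ≤ HB G₁ G₂ x := by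
  rw [HB_eq_sum]
  have : ∀ t : (V₁ × V₁) × V₂ × V₂, (0:ℝ) ≤
      W G₁ G₂ t.1.1 t.1.2 t.2.1 t.2.2 * bval (x t.1.1 t.2.1) * bval (x t.1.2 t.2.2) := fun t =>
    mul_nonneg (mul_nonneg (W_nonneg _ _ _ _ _ _) (bval_nonneg _)) (bval_nonneg _)
  have h : (0:ℝ) ≤ ∑ t : (V₁ × V₁) × V₂ × V₂,
      W G₁ G₂ t.1.1 t.1.2 t.2.1 t.2.2 * bval (x t.1.1 t.2.1) * bval (x t.1.2 t.2.2) :=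
    Finset.sum_nonneg fun t _ => this t
  linarith

lemma HB_mono {x x' : V₁ → V₂ → Bool} (h : ∀ u i, x' u i = true → x u i = true) :
    HB G₁ G₂ x' ≤ HB G₁ G₂ x := by
  rw [HB_eq_sum, HB_eq_sum]
  have : ∀ t : (V₁ × V₁) × V₂ × V₂,
      W G₁ G₂ t.1.1 t.1.2 t.2.1 t.2.2 * bval (x' t.1.1 t.2.1) * bval (x' t.1.2 t.2.2) ≤
      W G₁ G₂ t.1.1 t.1.2 t.2.1 t.2.2 * bval (x t.1.1 t.2.1) * bval (x t.1.2 t.2.2) := by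
    intro t
    apply mul_le_mul (mul_le_mul_of_nonneg_left (bval_le (h _ _)) (W_nonneg _ _ _ _ _ _))
      (bval_le (h _ _)) (bval_nonneg _)
    exact mul_nonneg (W_nonneg _ _ _ _ _ _) (bval_nonneg _)
  have h2 : ∑ t : (V₁ × V₁) × V₂ × V₂,
      W G₁ G₂ t.1.1 t.1.2 t.2.1 t.2.2 * bval (x' t.1.1 t.2.1) * bval (x' t.1.2 t.2.2) ≤
      ∑ t : (V₁ × V₁) × V₂ × V₂,
      W G₁ G₂ t.1.1 t.1.2 t.2.1 t.2.2 * bval (x t.1.1 t.2.1) * bval (x t.1.2 t.2.2) :=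
    Finset.sum_le_sum fun t _ => this t
  linarith

lemma HB_zero {x : V₁ → V₂ → Bool}
    (h : ∀ u v i j, x u i = true → x v j = true → W G₁ G₂ u v i j = 0) :
    HB G₁ G₂ x = 0 := by
  rw [HB_eq_sum]
  rw [Finset.sum_eq_zero, mul_zero]
  rintro ⟨⟨u, v⟩, i, j⟩ -
  rcases hx : x u i with _ | _
  · simp [hx]
  rcases hy : x v j with _ | _
  · simp [hy]
  simp [h u v i j hx hy]


lemma sum_update_diff {ι : Type*} [Fintype ι] [DecidableEq ι] (f g : ι → ℝ) (i₀ : ι)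
    (h : ∀ i, i ≠ i₀ → f i = g i) : ∑ i, f i = ∑ i, g i + (f i₀ - g i₀) := by
  rw [← Finset.sum_erase_add _ f (mem_univ i₀), ← Finset.sum_erase_add _ g (mem_univ i₀),
    Finset.sum_congr rfl (fun i hi => h i (Finset.ne_of_mem_erase hi))]
  ring

/-- The removal of entry `(u₀, i₀)` from `x`. -/
def xrem (x : V₁ → V₂ → Bool) (u₀ : V₁) (i₀ : V₂) : V₁ → V₂ → Bool :=
  fun u i => if u = u₀ ∧ i = i₀ then false else x u i

lemma xrem_le (x : V₁ → V₂ → Bool) (u₀ : V₁) (i₀ : V₂) :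
    ∀ u i, xrem x u₀ i₀ u i = true → x u i = true := by
  intro u i h
  by_cases hc : u = u₀ ∧ i = i₀ <;> simpa [xrem, hc] using h

lemma xrem_self (x : V₁ → V₂ → Bool) (u₀ : V₁) (i₀ : V₂) : xrem x u₀ i₀ u₀ i₀ = false := by
  simp [xrem]

lemma xrem_other (x : V₁ → V₂ → Bool) (u₀ : V₁) (i₀ : V₂) {u : V₁} {i : V₂}
    (h : ¬(u = u₀ ∧ i = i₀)) : xrem x u₀ i₀ u i = x u i := by
  simp [xrem, h]

lemma rowc_xrem_self {x : V₁ → V₂ → Bool} {u₀ : V₁} {i₀ : V₂} (hx : x u₀ i₀ = true) :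
    (rowc (xrem x u₀ i₀) u₀ : ℝ) = (rowc x u₀ : ℝ) - 1 := by
  have hfil : (univ.filter fun i => xrem x u₀ i₀ u₀ i = true) =
      (univ.filter fun i => x u₀ i = true).erase i₀ := by
    ext i
    by_cases hi : i = i₀ <;> simp [xrem, hi]
  have hmem : i₀ ∈ univ.filter fun i => x u₀ i = true := by simp [hx]
  have h1 : 1 ≤ rowc x u₀ := rowc_pos hx
  rw [rowc, hfil, Finset.card_erase_of_mem hmem]
  rw [rowc] at h1 ⊢
  push_cast [h1]
  ring

lemma rowc_xrem_other {x : V₁ → V₂ → Bool} (u₀ : V₁) (i₀ : V₂) {u : V₁} (hu : u ≠ u₀) :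
    rowc (xrem x u₀ i₀) u = rowc x u := by
  unfold rowc
  congr 1
  ext i
  simp [xrem, hu]

lemma colc_xrem_self {x : V₁ → V₂ → Bool} {u₀ : V₁} {i₀ : V₂} (hx : x u₀ i₀ = true) :
    (colc (xrem x u₀ i₀) i₀ : ℝ) = (colc x i₀ : ℝ) - 1 := by
  have hfil : (univ.filter fun u => xrem x u₀ i₀ u i₀ = true) =
      (univ.filter fun u => x u i₀ = true).erase u₀ := by
    ext u
    by_cases hu : u = u₀ <;> simp [xrem, hu]
  have hmem : u₀ ∈ univ.filter fun u => x u i₀ = true := by simp [hx]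
  have h1 : 1 ≤ colc x i₀ := colc_pos hx
  rw [colc, hfil, Finset.card_erase_of_mem hmem]
  rw [colc] at h1 ⊢
  push_cast [h1]
  ring

lemma colc_xrem_other {x : V₁ → V₂ → Bool} (u₀ : V₁) (i₀ : V₂) {i : V₂} (hi : i ≠ i₀) :
    colc (xrem x u₀ i₀) i = colc x i := by
  unfold colc
  congr 1
  ext u
  simp [xrem, hi]

lemma HB_drop {x : V₁ → V₂ → Bool} {u₀ v₀ : V₁} {i₀ j₀ : V₂}
    (hx : x u₀ i₀ = true) (hy : x v₀ j₀ = true) (huv : u₀ ≠ v₀)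
    (hW : 1 ≤ W G₁ G₂ u₀ v₀ i₀ j₀) :
    HB G₁ G₂ (xrem x u₀ i₀) ≤ HB G₁ G₂ x - 1 := by
  set x' := xrem x u₀ i₀ with hx'
  set F : (V₁ × V₁) × V₂ × V₂ → ℝ := fun t =>
    W G₁ G₂ t.1.1 t.1.2 t.2.1 t.2.2 * bval (x t.1.1 t.2.1) * bval (x t.1.2 t.2.2)
      - W G₁ G₂ t.1.1 t.1.2 t.2.1 t.2.2 * bval (x' t.1.1 t.2.1) * bval (x' t.1.2 t.2.2)
    with hF
  have hFnn : ∀ t, 0 ≤ F t := by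
    intro t
    have h1 : W G₁ G₂ t.1.1 t.1.2 t.2.1 t.2.2 * bval (x' t.1.1 t.2.1) * bval (x' t.1.2 t.2.2) ≤
        W G₁ G₂ t.1.1 t.1.2 t.2.1 t.2.2 * bval (x t.1.1 t.2.1) * bval (x t.1.2 t.2.2) := by
      apply mul_le_mul (mul_le_mul_of_nonneg_left (bval_le (xrem_le x u₀ i₀ _ _))
        (W_nonneg _ _ _ _ _ _)) (bval_le (xrem_le x u₀ i₀ _ _)) (bval_nonneg _)
      exact mul_nonneg (W_nonneg _ _ _ _ _ _) (bval_nonneg _)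
    simp only [hF]
    linarith
  set t₀ : (V₁ × V₁) × V₂ × V₂ := ((u₀, v₀), (i₀, j₀)) with ht₀
  set t₁ : (V₁ × V₁) × V₂ × V₂ := ((v₀, u₀), (j₀, i₀)) with ht₁
  have htne : t₀ ≠ t₁ := fun h => huv (congrArg (fun t => t.1.1) h)
  have hx'v : x' v₀ j₀ = x v₀ j₀ := xrem_other x u₀ i₀ (fun h => huv h.1.symm)
  have hx'u : x' u₀ i₀ = false := xrem_self x u₀ i₀
  have hFt₀ : 1 ≤ F t₀ := by
    have he : F t₀ = W G₁ G₂ u₀ v₀ i₀ j₀ := by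
      simp [hF, ht₀, hx, hy, hx'u, hx'v]
    rw [he]; exact hW
  have hFt₁ : 1 ≤ F t₁ := by
    have he : F t₁ = W G₁ G₂ v₀ u₀ j₀ i₀ := by
      simp [hF, ht₁, hx, hy, hx'u, hx'v]
    rw [he, ← W_symm]; exact hW
  have hsum : (2:ℝ) ≤ ∑ t, F t := by
    have hsub : ({t₀, t₁} : Finset ((V₁ × V₁) × V₂ × V₂)) ⊆ univ := Finset.subset_univ _
    have h2 : ∑ t ∈ ({t₀, t₁} : Finset _), F t ≤ ∑ t, F t :=
      Finset.sum_le_sum_of_subset_of_nonneg hsub fun t _ _ => hFnn t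
    rw [Finset.sum_pair htne] at h2
    linarith
  have hHB : HB G₁ G₂ x - HB G₁ G₂ x' = (1/2) * ∑ t, F t := by
    rw [HB_eq_sum, HB_eq_sum]
    rw [← mul_sub, Finset.sum_sub_distrib]
  have := hHB
  nlinarith [hsum]


variable {G₁} {G₂}

lemma Q_update_p (α β γ : ℝ) (x : V₁ → V₂ → Bool) (p : V₁ → Bool) (s : V₂ → Bool)
    (u₀ : V₁) (b : Bool) :
    QMCIS G₁ G₂ α β γ x (Function.update p u₀ b) s =
      QMCIS G₁ G₂ α β γ x p s
        + α * ((bval b - (rowc x u₀ : ℝ)) ^ 2 - (bval (p u₀) - (rowc x u₀ : ℝ)) ^ 2)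
        + γ * (bval (p u₀) - bval b) := by
  simp only [QMCIS, HO]
  rw [HA_eq, HA_eq]
  have h1 : ∑ u, (bval (Function.update p u₀ b u) - (rowc x u : ℝ)) ^ 2
      = ∑ u, (bval (p u) - (rowc x u : ℝ)) ^ 2
        + ((bval b - (rowc x u₀ : ℝ)) ^ 2 - (bval (p u₀) - (rowc x u₀ : ℝ)) ^ 2) := by
    have h := sum_update_diff (fun u => (bval (Function.update p u₀ b u) - (rowc x u : ℝ)) ^ 2)
      (fun u => (bval (p u) - (rowc x u : ℝ)) ^ 2) u₀
      (fun u hu => by simp only [Function.update_of_ne hu])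
    rw [h]; simp only [Function.update_self]
  have h2 : ∑ u, bval (Function.update p u₀ b u) = ∑ u, bval (p u) + (bval b - bval (p u₀)) := by
    have h := sum_update_diff (fun u => bval (Function.update p u₀ b u)) (fun u => bval (p u)) u₀
      (fun u hu => by simp only [Function.update_of_ne hu])
    rw [h]; simp only [Function.update_self]
  rw [h1, h2]
  ring

lemma Q_update_s (α β γ : ℝ) (x : V₁ → V₂ → Bool) (p : V₁ → Bool) (s : V₂ → Bool)
    (i₀ : V₂) (c : Bool) :
    QMCIS G₁ G₂ α β γ x p (Function.update s i₀ c) =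
      QMCIS G₁ G₂ α β γ x p s
        + α * ((bval c - (colc x i₀ : ℝ)) ^ 2 - (bval (s i₀) - (colc x i₀ : ℝ)) ^ 2) := by
  simp only [QMCIS, HO]
  rw [HA_eq, HA_eq]
  have h1 : ∑ i, (bval (Function.update s i₀ c i) - (colc x i : ℝ)) ^ 2
      = ∑ i, (bval (s i) - (colc x i : ℝ)) ^ 2
        + ((bval c - (colc x i₀ : ℝ)) ^ 2 - (bval (s i₀) - (colc x i₀ : ℝ)) ^ 2) := by
    have h := sum_update_diff (fun i => (bval (Function.update s i₀ c i) - (colc x i : ℝ)) ^ 2)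
      (fun i => (bval (s i) - (colc x i : ℝ)) ^ 2) i₀
      (fun i hi => by simp only [Function.update_of_ne hi])
    rw [h]; simp only [Function.update_self]
  rw [h1]
  ring

lemma Q_remove (α β γ : ℝ) (x : V₁ → V₂ → Bool) (p : V₁ → Bool) (s : V₂ → Bool)
    {u₀ : V₁} {i₀ : V₂} (hx : x u₀ i₀ = true) (b c : Bool) :
    QMCIS G₁ G₂ α β γ (xrem x u₀ i₀) (Function.update p u₀ b) (Function.update s i₀ c) =
      QMCIS G₁ G₂ α β γ x p s
        + α * ((bval b - ((rowc x u₀ : ℝ) - 1)) ^ 2 - (bval (p u₀) - (rowc x u₀ : ℝ)) ^ 2)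
        + α * ((bval c - ((colc x i₀ : ℝ) - 1)) ^ 2 - (bval (s i₀) - (colc x i₀ : ℝ)) ^ 2)
        + β * (HB G₁ G₂ (xrem x u₀ i₀) - HB G₁ G₂ x)
        + γ * (bval (p u₀) - bval b) := by
  simp only [QMCIS, HO]
  rw [HA_eq, HA_eq]
  have h1 : ∑ u, (bval (Function.update p u₀ b u) - (rowc (xrem x u₀ i₀) u : ℝ)) ^ 2
      = ∑ u, (bval (p u) - (rowc x u : ℝ)) ^ 2
        + ((bval b - ((rowc x u₀ : ℝ) - 1)) ^ 2 - (bval (p u₀) - (rowc x u₀ : ℝ)) ^ 2) := by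
    have h := sum_update_diff
      (fun u => (bval (Function.update p u₀ b u) - (rowc (xrem x u₀ i₀) u : ℝ)) ^ 2)
      (fun u => (bval (p u) - (rowc x u : ℝ)) ^ 2) u₀
      (fun u hu => by simp only [Function.update_of_ne hu, rowc_xrem_other u₀ i₀ hu])
    rw [h]; simp only [Function.update_self, rowc_xrem_self hx]
  have h2 : ∑ i, (bval (Function.update s i₀ c i) - (colc (xrem x u₀ i₀) i : ℝ)) ^ 2
      = ∑ i, (bval (s i) - (colc x i : ℝ)) ^ 2
        + ((bval c - ((colc x i₀ : ℝ) - 1)) ^ 2 - (bval (s i₀) - (colc x i₀ : ℝ)) ^ 2) := by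
    have h := sum_update_diff
      (fun i => (bval (Function.update s i₀ c i) - (colc (xrem x u₀ i₀) i : ℝ)) ^ 2)
      (fun i => (bval (s i) - (colc x i : ℝ)) ^ 2) i₀
      (fun i hi => by simp only [Function.update_of_ne hi, colc_xrem_other u₀ i₀ hi])
    rw [h]; simp only [Function.update_self, colc_xrem_self hx]
  have h3 : ∑ u, bval (Function.update p u₀ b u) = ∑ u, bval (p u) + (bval b - bval (p u₀)) := by
    have h := sum_update_diff (fun u => bval (Function.update p u₀ b u)) (fun u => bval (p u)) u₀
      (fun u hu => by simp only [Function.update_of_ne hu])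
    rw [h]; simp only [Function.update_self]
  rw [h1, h2, h3]
  ring


variable (G₁ G₂) in
/-- Assignment built from an isomorphism of induced subgraphs. -/
noncomputable def isoX (A : Finset V₁) (B : Finset V₂)
    (e : G₁.induce (A : Set V₁) ≃g G₂.induce (B : Set V₂)) : V₁ → V₂ → Bool :=
  fun u i => @decide (∃ h : u ∈ A, (e ⟨u, Finset.mem_coe.mpr h⟩).1 = i) (Classical.propDecidable _)

lemma isoX_iff {A : Finset V₁} {B : Finset V₂}
    {e : G₁.induce (A : Set V₁) ≃g G₂.induce (B : Set V₂)} {u : V₁} {i : V₂} :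
    isoX G₁ G₂ A B e u i = true ↔ ∃ h : u ∈ A, (e ⟨u, Finset.mem_coe.mpr h⟩).1 = i := by
  unfold isoX
  exact @decide_eq_true_iff _ (Classical.propDecidable _)

lemma rowc_isoX {A : Finset V₁} {B : Finset V₂}
    (e : G₁.induce (A : Set V₁) ≃g G₂.induce (B : Set V₂)) (u : V₁) :
    rowc (isoX G₁ G₂ A B e) u = if u ∈ A then 1 else 0 := by
  by_cases hu : u ∈ A
  · rw [rowc, show (univ.filter fun i => isoX G₁ G₂ A B e u i = true)
        = {(e ⟨u, Finset.mem_coe.mpr hu⟩).1} from ?_]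
    · simp [hu]
    ext i
    simp only [mem_filter, mem_univ, true_and, mem_singleton, isoX_iff]
    exact ⟨fun ⟨_, he⟩ => he.symm, fun he => ⟨hu, he.symm⟩⟩
  · rw [rowc, show (univ.filter fun i => isoX G₁ G₂ A B e u i = true) = ∅ from ?_]
    · simp [hu]
    ext i
    simp only [mem_filter, mem_univ, true_and, notMem_empty, iff_false, isoX_iff]
    rintro ⟨h, -⟩
    exact hu h

lemma colc_isoX {A : Finset V₁} {B : Finset V₂}
    (e : G₁.induce (A : Set V₁) ≃g G₂.induce (B : Set V₂)) (i : V₂) :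
    colc (isoX G₁ G₂ A B e) i = if i ∈ B then 1 else 0 := by
  by_cases hi : i ∈ B
  · rw [colc, show (univ.filter fun u => isoX G₁ G₂ A B e u i = true)
        = {(e.symm ⟨i, Finset.mem_coe.mpr hi⟩).1} from ?_]
    · simp [hi]
    ext u
    simp only [mem_filter, mem_univ, true_and, mem_singleton, isoX_iff]
    constructor
    · rintro ⟨h, he⟩
      have he' : e ⟨u, Finset.mem_coe.mpr h⟩ = ⟨i, Finset.mem_coe.mpr hi⟩ := Subtype.ext he
      have h2 := congrArg e.symm he'
      rw [RelIso.symm_apply_apply] at h2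
      exact congrArg Subtype.val h2
    · intro he
      have hA : u ∈ A := by
        have := (e.symm ⟨i, Finset.mem_coe.mpr hi⟩).2
        rw [← he] at this
        exact Finset.mem_coe.mp this
      refine ⟨hA, ?_⟩
      have h2 : (⟨u, Finset.mem_coe.mpr hA⟩ : (A : Set V₁)) = e.symm ⟨i, Finset.mem_coe.mpr hi⟩ :=
        Subtype.ext he
      rw [h2, RelIso.apply_symm_apply]
  · rw [colc, show (univ.filter fun u => isoX G₁ G₂ A B e u i = true) = ∅ from ?_]
    · simp [hi]
    ext u
    simp only [mem_filter, mem_univ, true_and, notMem_empty, iff_false, isoX_iff]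
    rintro ⟨h, he⟩
    exact hi (by rw [← he]; exact Finset.mem_coe.mp (e ⟨u, Finset.mem_coe.mpr h⟩).2)

lemma Q_of_iso (α β γ : ℝ) (A : Finset V₁) (B : Finset V₂)
    (e : G₁.induce (A : Set V₁) ≃g G₂.induce (B : Set V₂)) :
    ∃ (x : V₁ → V₂ → Bool) (p : V₁ → Bool) (s : V₂ → Bool),
      QMCIS G₁ G₂ α β γ x p s = -γ * A.card := by
  classical
  refine ⟨isoX G₁ G₂ A B e, fun u => decide (u ∈ A), fun i => decide (i ∈ B), ?_⟩
  have key : ∀ a b : (A : Set V₁), G₂.Adj (e a).1 (e b).1 ↔ G₁.Adj a.1 b.1 := by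
    intro a b
    simpa [SimpleGraph.comap_adj] using e.map_rel_iff (a := a) (b := b)
  have hHA : HA (isoX G₁ G₂ A B e) (fun u => decide (u ∈ A)) (fun i => decide (i ∈ B)) = 0 := by
    rw [HA_eq]
    rw [Finset.sum_eq_zero, Finset.sum_eq_zero, add_zero]
    · intro i _
      rw [colc_isoX]
      by_cases hi : i ∈ B <;> simp [hi, bval]
    · intro u _
      rw [rowc_isoX]
      by_cases hu : u ∈ A <;> simp [hu, bval]
  have hHB : HB G₁ G₂ (isoX G₁ G₂ A B e) = 0 := by
    apply HB_zero
    intro u v i j hx hy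
    obtain ⟨hu, hi⟩ := isoX_iff.mp hx
    obtain ⟨hv, hj⟩ := isoX_iff.mp hy
    have h1 : ¬(G₁.Adj u v ∧ i ≠ j ∧ ¬ G₂.Adj i j) := by
      rintro ⟨ha, -, hn⟩
      exact hn (by rw [← hi, ← hj]; exact (key _ _).mpr ha)
    have h2 : ¬(u ≠ v ∧ ¬ G₁.Adj u v ∧ G₂.Adj i j) := by
      rintro ⟨-, hn, ha⟩
      rw [← hi, ← hj] at ha
      exact hn ((key _ _).mp ha)
    simp [W, h1, h2]
  have hHO : HO (fun u => decide (u ∈ A)) = -(A.card : ℝ) := by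
    have hfil : (univ.filter fun u => (decide (u ∈ A)) = true) = A := by ext u; simp
    rw [HO_eq, hfil]
  rw [QMCIS, hHA, hHB, hHO]
  ring


lemma iso_of_good {x : V₁ → V₂ → Bool}
    (hr1 : ∀ u, rowc x u ≤ 1) (hc1 : ∀ i, colc x i ≤ 1)
    (hgood : ∀ u v i j, x u i = true → x v j = true → W G₁ G₂ u v i j = 0) :
    ∃ B : Finset V₂, Nonempty
      (G₁.induce (((univ.filter fun u => ∃ i, x u i = true) : Finset V₁) : Set V₁) ≃g
        G₂.induce ((B : Finset V₂) : Set V₂)) := by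
  classical
  have hfun : ∀ u i j, x u i = true → x u j = true → i = j := by
    intro u i j hi hj
    by_contra hne
    have hsub : ({i, j} : Finset V₂) ⊆ univ.filter fun k => x u k = true := by
      intro k hk
      rcases Finset.mem_insert.mp hk with rfl | hk
      · simp [hi]
      · rcases Finset.mem_singleton.mp hk with rfl
        simp [hj]
    have h2 : 2 ≤ rowc x u := by
      rw [rowc, ← Finset.card_pair hne]
      exact Finset.card_le_card hsub
    have := h2.trans (hr1 u)
    norm_num at this
  have hinj : ∀ u v i, x u i = true → x v i = true → u = v := by
    intro u v i hu hv
    by_contra hne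
    have hsub : ({u, v} : Finset V₁) ⊆ univ.filter fun w => x w i = true := by
      intro k hk
      rcases Finset.mem_insert.mp hk with rfl | hk
      · simp [hu]
      · rcases Finset.mem_singleton.mp hk with rfl
        simp [hv]
    have h2 : 2 ≤ colc x i := by
      rw [colc, ← Finset.card_pair hne]
      exact Finset.card_le_card hsub
    have := h2.trans (hc1 i)
    norm_num at this
  have hg : ∀ u v i j, x u i = true → x v j = true →
      (¬(G₁.Adj u v ∧ i ≠ j ∧ ¬ G₂.Adj i j)) ∧ (¬(u ≠ v ∧ ¬ G₁.Adj u v ∧ G₂.Adj i j)) := by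
    intro u v i j hi hj
    constructor <;> intro hc
    · have h := one_le_W G₁ G₂ (Or.inl hc)
      rw [hgood u v i j hi hj] at h
      linarith
    · have h := one_le_W G₁ G₂ (Or.inr hc)
      rw [hgood u v i j hi hj] at h
      linarith
  set A : Finset V₁ := univ.filter fun u => ∃ i, x u i = true with hA
  set B : Finset V₂ := univ.filter fun i => ∃ u, x u i = true with hB
  refine ⟨B, ?_⟩
  have hmemA : ∀ a : ↥(A : Set V₁), ∃ i, x a.1 i = true := by
    intro a
    have h := a.2
    simp only [Finset.mem_coe, hA, Finset.mem_filter] at h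
    exact h.2
  set φ : ↥(A : Set V₁) → V₂ := fun a => (hmemA a).choose with hφdef
  have hφ : ∀ a, x a.1 (φ a) = true := fun a => (hmemA a).choose_spec
  set f : ↥(A : Set V₁) → ↥(B : Set V₂) := fun a =>
    ⟨φ a, Finset.mem_coe.mpr (by rw [hB, Finset.mem_filter]; exact ⟨mem_univ _, a.1, hφ a⟩)⟩
    with hfdef
  have hinj' : Function.Injective f := by
    intro a b h
    have hval : φ a = φ b := congrArg Subtype.val h
    exact Subtype.ext (hinj a.1 b.1 (φ a) (hφ a) (hval ▸ hφ b))
  have hsurj : Function.Surjective f := by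
    intro b
    have hb : ∃ u, x u b.1 = true := by
      have h := b.2
      simp only [Finset.mem_coe, hB, Finset.mem_filter] at h
      exact h.2
    obtain ⟨u, hu⟩ := hb
    have huA : u ∈ A := by
      rw [hA, Finset.mem_filter]
      exact ⟨mem_univ _, b.1, hu⟩
    refine ⟨⟨u, Finset.mem_coe.mpr huA⟩, ?_⟩
    apply Subtype.ext
    show φ ⟨u, Finset.mem_coe.mpr huA⟩ = b.1
    exact hfun u _ _ (hφ ⟨u, Finset.mem_coe.mpr huA⟩) hu
  refine ⟨⟨Equiv.ofBijective f ⟨hinj', hsurj⟩, ?_⟩⟩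
  intro a b
  show (G₂.induce (B : Set V₂)).Adj (f a) (f b) ↔ (G₁.induce (A : Set V₁)).Adj a b
  have hred : ((G₂.induce (B : Set V₂)).Adj (f a) (f b) ↔ G₂.Adj (φ a) (φ b)) ∧
      ((G₁.induce (A : Set V₁)).Adj a b ↔ G₁.Adj a.1 b.1) := by
    exact ⟨Iff.rfl, Iff.rfl⟩
  rw [hred.1, hred.2]
  constructor
  · intro h2
    by_cases he : a.1 = b.1
    · exfalso
      have hab : a = b := Subtype.ext he
      rw [hab] at h2
      exact G₂.irrefl h2
    · have h := (hg a.1 b.1 (φ a) (φ b) (hφ a) (hφ b)).2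
      tauto
  · intro h1
    have hne : a.1 ≠ b.1 := G₁.ne_of_adj h1
    have hφne : φ a ≠ φ b := fun hE => hne (hinj _ _ _ (hφ a) (hE ▸ hφ b))
    have h := (hg a.1 b.1 (φ a) (φ b) (hφ a) (hφ b)).1
    tauto

end MCISaux

open MCISaux in
theorem mcis_qubo_min_value_and_optimality
    [Fintype V₁] [Fintype V₂] [DecidableEq V₁] [DecidableEq V₂]
    (G₁ : SimpleGraph V₁) (G₂ : SimpleGraph V₂)
    [DecidableRel G₁.Adj] [DecidableRel G₂.Adj]
    (α β γ : ℝ) (hα : 0 < α) (hβ : 0 < β) (hγ : 0 < γ) (hαγ : γ < α) (hβγ : γ < β)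
    (x : V₁ → V₂ → Bool) (p : V₁ → Bool) (s : V₂ → Bool)
    (hmin : ∀ (x' : V₁ → V₂ → Bool) (p' : V₁ → Bool) (s' : V₂ → Bool),
      QMCIS G₁ G₂ α β γ x p s ≤ QMCIS G₁ G₂ α β γ x' p' s') :
    QMCIS G₁ G₂ α β γ x p s =
        -γ * (Finset.univ.filter (fun u : V₁ => ∃ i, x u i = true)).card ∧
    IsGreatest {m : ℕ | ∃ (A : Finset V₁) (B : Finset V₂), A.card = m ∧
        Nonempty (G₁.induce (A : Set V₁) ≃g G₂.induce (B : Set V₂))}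
      (Finset.univ.filter (fun u : V₁ => ∃ i, x u i = true)).card := by
  classical
  -- Step 1: p is pinned by the row counts
  have hp : ∀ u, p u = true ↔ 1 ≤ rowc x u := by
    intro u
    constructor
    · intro hpu
      by_contra hr
      have hr0 : rowc x u = 0 := by omega
      have h := hmin x (Function.update p u false) s
      rw [Q_update_p α β γ x p s u false, hpu, hr0] at h
      norm_num [bval] at h
      linarith
    · intro hr
      by_contra hpu
      have hpu' : p u = false := by simpa using hpu
      have h := hmin x (Function.update p u true) s
      rw [Q_update_p α β γ x p s u true, hpu'] at h
      have hr' : (1:ℝ) ≤ (rowc x u : ℝ) := by exact_mod_cast hr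
      simp only [bval_true, bval_false] at h
      nlinarith [h, hr']
  -- Step 1': s is pinned by the column counts
  have hs : ∀ i, s i = true ↔ 1 ≤ colc x i := by
    intro i
    constructor
    · intro hsi
      by_contra hc
      have hc0 : colc x i = 0 := by omega
      have h := hmin x p (Function.update s i false)
      rw [Q_update_s α β γ x p s i false, hsi, hc0] at h
      norm_num [bval] at h
      linarith
    · intro hc
      by_contra hsi
      have hsi' : s i = false := by simpa using hsi
      have h := hmin x p (Function.update s i true)
      rw [Q_update_s α β γ x p s i true, hsi'] at h
      have hc' : (1:ℝ) ≤ (colc x i : ℝ) := by exact_mod_cast hc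
      simp only [bval_true, bval_false] at h
      nlinarith [h, hc']
  -- Step 2: row counts are at most 1
  have hr1 : ∀ u, rowc x u ≤ 1 := by
    intro u
    by_contra hr
    have hr2 : 2 ≤ rowc x u := by omega
    obtain ⟨i₀, hi₀⟩ := Finset.card_pos.mp (show 0 < rowc x u by omega)
    have hx0 : x u i₀ = true := by simpa using hi₀
    have hpu : p u = true := (hp u).mpr (by omega)
    have hC1 : 1 ≤ colc x i₀ := colc_pos hx0
    have hsi : s i₀ = true := (hs i₀).mpr hC1
    set c : Bool := decide (2 ≤ colc x i₀) with hc
    have h := hmin (xrem x u i₀) (Function.update p u true) (Function.update s i₀ c)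
    rw [Q_remove α β γ x p s hx0 true c, hpu, hsi] at h
    have hR' : (2:ℝ) ≤ (rowc x u : ℝ) := by exact_mod_cast hr2
    have hrow : α * ((bval true - ((rowc x u : ℝ) - 1)) ^ 2 -
        (bval true - (rowc x u : ℝ)) ^ 2) ≤ -α := by
      simp only [bval_true]
      nlinarith [hR']
    have hcol : α * ((bval c - ((colc x i₀ : ℝ) - 1)) ^ 2 -
        (bval true - (colc x i₀ : ℝ)) ^ 2) ≤ 0 := by
      by_cases h2 : 2 ≤ colc x i₀
      · have hcv : c = true := by simp [hc, h2]
        have hC' : (2:ℝ) ≤ (colc x i₀ : ℝ) := by exact_mod_cast h2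
        rw [hcv]
        simp only [bval_true]
        nlinarith [hC']
      · have hCe : colc x i₀ = 1 := by omega
        have hcv : c = false := by simp [hc, h2]
        rw [hcv, hCe]
        norm_num [bval]
    have hHBm : HB G₁ G₂ (xrem x u i₀) - HB G₁ G₂ x ≤ 0 := by
      have := HB_mono (G₁ := G₁) (G₂ := G₂) (xrem_le x u i₀)
      linarith
    simp only [bval_true] at h hrow hcol
    nlinarith [h, hrow, hcol, hHBm, hβ]
  -- Step 2': column counts are at most 1
  have hc1 : ∀ i, colc x i ≤ 1 := by
    intro i
    by_contra hcge
    have hc2 : 2 ≤ colc x i := by omega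
    obtain ⟨u₀, hu₀⟩ := Finset.card_pos.mp (show 0 < colc x i by omega)
    have hx0 : x u₀ i = true := by simpa using hu₀
    have hR1 : rowc x u₀ = 1 := le_antisymm (hr1 u₀) (rowc_pos hx0)
    have hpu : p u₀ = true := (hp u₀).mpr (by omega)
    have hsi : s i = true := (hs i).mpr (by omega)
    have h := hmin (xrem x u₀ i) (Function.update p u₀ false) (Function.update s i true)
    rw [Q_remove α β γ x p s hx0 false true, hpu, hsi, hR1] at h
    have hC' : (2:ℝ) ≤ (colc x i : ℝ) := by exact_mod_cast hc2
    have hcol : α * ((bval true - ((colc x i : ℝ) - 1)) ^ 2 -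
        (bval true - (colc x i : ℝ)) ^ 2) ≤ -α := by
      simp only [bval_true]
      nlinarith [hC']
    have hHBm : HB G₁ G₂ (xrem x u₀ i) - HB G₁ G₂ x ≤ 0 := by
      have := HB_mono (G₁ := G₁) (G₂ := G₂) (xrem_le x u₀ i)
      linarith
    simp only [bval_true, bval_false] at h hcol
    norm_num at h
    nlinarith [h, hcol, hHBm, hβ]
  -- Step 3: no adjacency violations
  have hgood : ∀ u v i j, x u i = true → x v j = true → W G₁ G₂ u v i j = 0 := by
    intro u v i j hxu hxv
    by_contra hW0
    have hone : (G₁.Adj u v ∧ i ≠ j ∧ ¬ G₂.Adj i j) ∨ (u ≠ v ∧ ¬ G₁.Adj u v ∧ G₂.Adj i j) := by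
      by_contra hno
      rw [not_or] at hno
      exact hW0 (by simp only [W, if_neg hno.1, if_neg hno.2, add_zero])
    have huv : u ≠ v := by
      rcases hone with h | h
      · exact G₁.ne_of_adj h.1
      · exact h.1
    have hW1 : 1 ≤ W G₁ G₂ u v i j := one_le_W G₁ G₂ hone
    have hR1 : rowc x u = 1 := le_antisymm (hr1 u) (rowc_pos hxu)
    have hC1 : colc x i = 1 := le_antisymm (hc1 i) (colc_pos hxu)
    have hpu : p u = true := (hp u).mpr (by omega)
    have hsi : s i = true := (hs i).mpr (by omega)
    have hdrop := HB_drop G₁ G₂ hxu hxv huv hW1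
    have h := hmin (xrem x u i) (Function.update p u false) (Function.update s i false)
    rw [Q_remove α β γ x p s hxu false false, hpu, hsi, hR1, hC1] at h
    simp only [bval_true, bval_false] at h
    norm_num at h
    nlinarith [h, hdrop, hβ]
  -- value of the minimum
  have hAx : (Finset.univ.filter fun u => p u = true)
      = Finset.univ.filter (fun u : V₁ => ∃ i, x u i = true) := by
    ext u
    simp only [Finset.mem_filter, Finset.mem_univ, true_and]
    rw [hp u]
    constructor
    · intro h1
      obtain ⟨i, hi⟩ := Finset.card_pos.mp (show 0 < rowc x u by omega)
      exact ⟨i, by simpa using hi⟩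
    · rintro ⟨i, hi⟩
      exact rowc_pos hi
  have hHA : HA x p s = 0 := by
    rw [HA_eq]
    rw [Finset.sum_eq_zero, Finset.sum_eq_zero, add_zero]
    · intro i _
      by_cases h1 : 1 ≤ colc x i
      · have hC : colc x i = 1 := le_antisymm (hc1 i) h1
        rw [(hs i).mpr h1, hC]
        norm_num
      · have hC : colc x i = 0 := by omega
        have hsf : s i = false := by
          cases hsv : s i
          · rfl
          · exact absurd ((hs i).mp hsv) h1
        rw [hsf, hC]
        norm_num
    · intro u _
      by_cases h1 : 1 ≤ rowc x u
      · have hR : rowc x u = 1 := le_antisymm (hr1 u) h1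
        rw [(hp u).mpr h1, hR]
        norm_num
      · have hR : rowc x u = 0 := by omega
        have hpf : p u = false := by
          cases hpv : p u
          · rfl
          · exact absurd ((hp u).mp hpv) h1
        rw [hpf, hR]
        norm_num
  have hHB : HB G₁ G₂ x = 0 := HB_zero G₁ G₂ hgood
  have hQval : QMCIS G₁ G₂ α β γ x p s =
      -γ * (Finset.univ.filter (fun u : V₁ => ∃ i, x u i = true)).card := by
    rw [QMCIS, hHA, hHB, HO_eq, hAx]
    ring
  refine ⟨hQval, ?_, ?_⟩
  · -- membership
    obtain ⟨B, ⟨e⟩⟩ := iso_of_good (G₁ := G₁) (G₂ := G₂) hr1 hc1 hgood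
    exact ⟨Finset.univ.filter (fun u : V₁ => ∃ i, x u i = true), B, rfl, ⟨e⟩⟩
  · -- upper bound
    rintro m ⟨A, B, hcard, ⟨e⟩⟩
    obtain ⟨x', p', s', hx'⟩ := Q_of_iso α β γ A B e
    have h := hmin x' p' s'
    rw [hx', hQval, hcard] at h
    have hle : (m : ℝ) ≤ ((Finset.univ.filter (fun u : V₁ => ∃ i, x u i = true)).card : ℝ) := by
      nlinarith [h, hγ]
    exact_mod_cast hle
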